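/- arXiv:2009.08533 — 3 statements merged into one kernel-verified Lean document; each statement's English description precedes it below -/
import Mathlib

section
/- Let U ⊆ ℝ^d be open, c : U → ℝ^{d×d} a continuously differentiable field of symmetric matrices, p : U → (0,∞) continuously differentiable, and R : U → (0,∞) twice continuously differentiable. Suppose that c(x) ∇log(R²/p)(x) = div c(x) for every x ∈ U, where (div c)_i := Σ_j ∂_j c_{ij}. Then, writing L f := (1/2) Σ_{i,j} c_{ij} ∂_{ij} f, the vector field p c ∇(log R) satisfies div( p c ∇log R ) = 2 p ∇(log R)ᵀ c ∇(log R) + 2 p L(log R) on U, where the divergence of a vector field V is div V := Σ_i ∂_i V_i. -/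
open scoped BigOperators

/-- The partial derivative `∂_i f (x)`. -/
noncomputable def pd {d : ℕ} (f : (Fin d → ℝ) → ℝ) (i : Fin d) (x : Fin d → ℝ) : ℝ :=
  fderiv ℝ f x (Pi.single i 1)

/-- The second-order operator `L f := (1/2) ∑_{i,j} c_{ij} ∂_{ij} f`. -/
noncomputable def Lop {d : ℕ} (c : Fin d → Fin d → (Fin d → ℝ) → ℝ)
    (f : (Fin d → ℝ) → ℝ) (x : Fin d → ℝ) : ℝ :=
  (1 / 2) * ∑ i, ∑ j, c i j x * pd (pd f j) i x

open scoped Topology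
open Matrix

/-!
The product rule splits `div (p c ∇log R)` into `∇p · c∇log R`, the term `p (div c) · ∇log R`
(by symmetry of `c`, `∑ᵢ ∂ᵢ c_{ij} = (div c)_j`) and
`p ∑ c_{ij} ∂_{ij} log R = 2 p L(log R)`. Multiplied by `p`, the hypothesis reads
`p div c = c (2p ∇log R - ∇p)`, so the middle term equals `2p ∇(log R)ᵀ c ∇log R - ∇pᵀ c ∇log R`,
and the `∇p` contributions cancel.
-/

theorem Matrix.IsSymm.dotProduct_mulVec_add_mul_dotProduct {n R : Type*} [Fintype n]
    [CommRing R] {C : Matrix n n R} (hC : C.IsSymm) {P : R} {q ℓ D : n → R}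
    (hD : P • D = C *ᵥ ((2 * P) • ℓ - q)) :
    q ⬝ᵥ C *ᵥ ℓ + P * (D ⬝ᵥ ℓ) = 2 * P * (ℓ ⬝ᵥ C *ᵥ ℓ) := by
  have hDℓ : P * (D ⬝ᵥ ℓ) = (C *ᵥ ℓ) ⬝ᵥ ((2 * P) • ℓ - q) := by
    rw [← smul_eq_mul, ← smul_dotProduct, hD, dotProduct_comm, dotProduct_mulVec,
      ← mulVec_transpose, hC.eq]
  rw [hDℓ, dotProduct_sub, dotProduct_smul, smul_eq_mul, dotProduct_comm (C *ᵥ ℓ),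
    dotProduct_comm (C *ᵥ ℓ)]
  ring

section PartialDerivative

variable {d : ℕ} {f g : (Fin d → ℝ) → ℝ} {x : Fin d → ℝ}

theorem pd_congr_of_eventuallyEq (h : f =ᶠ[𝓝 x] g) (i : Fin d) : pd f i x = pd g i x := by
  rw [pd, pd, h.fderiv_eq]

theorem pd_sub (hf : DifferentiableAt ℝ f x) (hg : DifferentiableAt ℝ g x) (i : Fin d) :
    pd (fun y => f y - g y) i x = pd f i x - pd g i x := by
  simp [pd, fderiv_fun_sub hf hg]

theorem pd_const_mul (a : ℝ) (hf : DifferentiableAt ℝ f x) (i : Fin d) :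
    pd (fun y => a * f y) i x = a * pd f i x := by
  simp [pd, fderiv_const_mul hf]

theorem pd_mul (hf : DifferentiableAt ℝ f x) (hg : DifferentiableAt ℝ g x) (i : Fin d) :
    pd (fun y => f y * g y) i x = pd f i x * g x + f x * pd g i x := by
  simp [pd, fderiv_fun_mul hf hg]
  ring

theorem pd_sum {ι : Type*} {s : Finset ι} {f : ι → (Fin d → ℝ) → ℝ}
    (hf : ∀ j ∈ s, DifferentiableAt ℝ (f j) x) (i : Fin d) :
    pd (fun y => ∑ j ∈ s, f j y) i x = ∑ j ∈ s, pd (f j) i x := by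
  simp [pd, fderiv_fun_sum hf]

theorem pd_log (hf : DifferentiableAt ℝ f x) (hfx : f x ≠ 0) (i : Fin d) :
    pd (fun y => Real.log (f y)) i x = pd f i x / f x := by
  simp [pd, (hf.hasFDerivAt.log hfx).fderiv, div_eq_inv_mul]

theorem ContDiffAt.differentiableAt_pd (hf : ContDiffAt ℝ 2 f x) (i : Fin d) :
    DifferentiableAt ℝ (pd f i) x :=
  ((hf.fderiv_right (by norm_num)).clm_apply contDiffAt_const).differentiableAt one_ne_zero

theorem pd_log_sq_div {R p : (Fin d → ℝ) → ℝ} (hR : DifferentiableAt ℝ R x)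
    (hp : DifferentiableAt ℝ p x) (hR0 : ∀ᶠ y in 𝓝 x, R y ≠ 0) (hp0 : ∀ᶠ y in 𝓝 x, p y ≠ 0)
    (i : Fin d) :
    pd (fun y => Real.log (R y ^ 2 / p y)) i x
      = 2 * pd (fun y => Real.log (R y)) i x - pd p i x / p x := by
  have hlog : (fun y => Real.log (R y ^ 2 / p y))
      =ᶠ[𝓝 x] fun y => 2 * Real.log (R y) - Real.log (p y) := by
    filter_upwards [hR0, hp0] with y hRy hpy
    rw [Real.log_div (pow_ne_zero 2 hRy) hpy, Real.log_pow]
    push_cast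
    ring
  rw [pd_congr_of_eventuallyEq hlog, pd_sub ((hR.log hR0.self_of_nhds).const_mul 2)
    (hp.log hp0.self_of_nhds), pd_const_mul _ (hR.log hR0.self_of_nhds),
    pd_log hp hp0.self_of_nhds]

theorem sum_pd_mul_sum_mul {p : (Fin d → ℝ) → ℝ} {c : Fin d → Fin d → (Fin d → ℝ) → ℝ}
    {v : Fin d → (Fin d → ℝ) → ℝ} (hp : DifferentiableAt ℝ p x)
    (hc : ∀ i j, DifferentiableAt ℝ (c i j) x) (hv : ∀ j, DifferentiableAt ℝ (v j) x) :
    ∑ i, pd (fun y => p y * ∑ j, c i j y * v j y) i x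
      = ∑ i, pd p i x * ∑ j, c i j x * v j x
        + p x * ∑ i, ∑ j, pd (c i j) i x * v j x
        + p x * ∑ i, ∑ j, c i j x * pd (v j) i x := by
  have hterm : ∀ i, pd (fun y => p y * ∑ j, c i j y * v j y) i x
      = pd p i x * ∑ j, c i j x * v j x
        + p x * ∑ j, (pd (c i j) i x * v j x + c i j x * pd (v j) i x) := fun i => by
    rw [pd_mul hp (DifferentiableAt.fun_sum fun j _ => (hc i j).fun_mul (hv j)),
      pd_sum fun j _ => (hc i j).fun_mul (hv j)]
    simp only [pd_mul (hc i _) (hv _)]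
  rw [Finset.sum_congr rfl fun i _ => hterm i]
  simp only [Finset.sum_add_distrib, mul_add, Finset.mul_sum, add_assoc]

end PartialDerivative

section Divergence

variable {d : ℕ}

noncomputable def grad (f : (Fin d → ℝ) → ℝ) (x : Fin d → ℝ) : Fin d → ℝ := fun i => pd f i x

noncomputable def rowDiv (c : Fin d → Fin d → (Fin d → ℝ) → ℝ) (x : Fin d → ℝ) : Fin d → ℝ :=
  fun i => ∑ j, pd (c i j) j x

theorem sum_sum_pd_mul_eq_rowDiv_dotProduct {c : Fin d → Fin d → (Fin d → ℝ) → ℝ}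
    {x : Fin d → ℝ} (hc : ∀ᶠ y in 𝓝 x, ∀ i j, c i j y = c j i y) (v : Fin d → ℝ) :
    ∑ i, ∑ j, pd (c i j) i x * v j = rowDiv c x ⬝ᵥ v := by
  rw [Finset.sum_comm]
  refine Finset.sum_congr rfl fun j _ => ?_
  rw [rowDiv, Finset.sum_mul]
  exact Finset.sum_congr rfl fun i _ =>
    by rw [pd_congr_of_eventuallyEq (hc.mono fun y hy => hy i j)]

theorem smul_rowDiv_eq_mulVec_of_log_sq_div {c : Fin d → Fin d → (Fin d → ℝ) → ℝ}
    {R p : (Fin d → ℝ) → ℝ} {x : Fin d → ℝ} (hR : DifferentiableAt ℝ R x)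
    (hp : DifferentiableAt ℝ p x) (hR0 : ∀ᶠ y in 𝓝 x, R y ≠ 0) (hp0 : ∀ᶠ y in 𝓝 x, p y ≠ 0)
    (hdiv : ∀ i, ∑ j, c i j x * pd (fun y => Real.log (R y ^ 2 / p y)) j x = rowDiv c x i) :
    p x • rowDiv c x
      = (of fun i j => c i j x) *ᵥ ((2 * p x) • grad (fun y => Real.log (R y)) x - grad p x) := by
  funext i
  simp only [Pi.smul_apply, smul_eq_mul, ← hdiv i, pd_log_sq_div hR hp hR0 hp0, mulVec,
    dotProduct, Finset.mul_sum, of_apply, Pi.sub_apply, grad]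
  refine Finset.sum_congr rfl fun j _ => ?_
  field_simp [hp0.self_of_nhds]

end Divergence

/-- if `c ∇log(R²/p) = div c` on an open set `U` (with `c` a `C¹` symmetric
matrix field, `p > 0` of class `C¹`, `R > 0` of class `C²`), then
`div(p c ∇ log R) = 2 p ∇(log R)ᵀ c ∇(log R) + 2 p L(log R)` on `U`. -/
theorem statement14 {d : ℕ} (U : Set (Fin d → ℝ)) (hU : IsOpen U)
    (c : Fin d → Fin d → (Fin d → ℝ) → ℝ)
    (hc : ∀ i j, ContDiffOn ℝ 1 (c i j) U)
    (hcsymm : ∀ x ∈ U, ∀ i j, c i j x = c j i x)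
    (p : (Fin d → ℝ) → ℝ) (hppos : ∀ x ∈ U, 0 < p x) (hp : ContDiffOn ℝ 1 p U)
    (R : (Fin d → ℝ) → ℝ) (hRpos : ∀ x ∈ U, 0 < R x) (hR : ContDiffOn ℝ 2 R U)
    (hdiv : ∀ x ∈ U, ∀ i,
      ∑ j, c i j x * pd (fun y => Real.log (R y ^ 2 / p y)) j x
        = ∑ j, pd (c i j) j x) :
    ∀ x ∈ U,
      ∑ i, pd (fun y => p y * ∑ j, c i j y * pd (fun z => Real.log (R z)) j y) i x
        = 2 * p x *
            (∑ i, ∑ j, pd (fun z => Real.log (R z)) i x * c i j x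
              * pd (fun z => Real.log (R z)) j x)
          + 2 * p x * Lop c (fun z => Real.log (R z)) x := by
  intro x hx
  set ℓ : (Fin d → ℝ) → ℝ := fun z => Real.log (R z) with hℓ
  have hUx : U ∈ 𝓝 x := hU.mem_nhds hx
  have hpx : DifferentiableAt ℝ p x := (hp.contDiffAt hUx).differentiableAt one_ne_zero
  have hcx : ∀ i j, DifferentiableAt ℝ (c i j) x := fun i j =>
    ((hc i j).contDiffAt hUx).differentiableAt one_ne_zero
  have hRx : ContDiffAt ℝ 2 R x := hR.contDiffAt hUx
  have hℓx : ∀ j, DifferentiableAt ℝ (pd ℓ j) x := fun j =>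
    (hRx.log (hRpos x hx).ne').differentiableAt_pd j
  set C : Matrix (Fin d) (Fin d) ℝ := of fun i j => c i j x
  have hC : C.IsSymm := IsSymm.ext fun i j => hcsymm x hx j i
  have key := hC.dotProduct_mulVec_add_mul_dotProduct <|
    smul_rowDiv_eq_mulVec_of_log_sq_div (hRx.differentiableAt two_ne_zero) hpx
      (Filter.eventually_of_mem hUx fun y hy => (hRpos y hy).ne')
      (Filter.eventually_of_mem hUx fun y hy => (hppos y hy).ne') (hdiv x hx)
  rw [← hℓ] at key
  have hquad : ∑ i, ∑ j, pd ℓ i x * c i j x * pd ℓ j x = grad ℓ x ⬝ᵥ C *ᵥ grad ℓ x := by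
    simp [dotProduct, mulVec, C, grad, Finset.mul_sum, mul_assoc]
  calc ∑ i, pd (fun y => p y * ∑ j, c i j y * pd ℓ j y) i x
      = grad p x ⬝ᵥ C *ᵥ grad ℓ x + p x * (rowDiv c x ⬝ᵥ grad ℓ x)
          + p x * ∑ i, ∑ j, c i j x * pd (pd ℓ j) i x := by
        rw [sum_pd_mul_sum_mul hpx hcx hℓx,
          sum_sum_pd_mul_eq_rowDiv_dotProduct (Filter.eventually_of_mem hUx hcsymm)]
        rfl
    _ = 2 * p x * (grad ℓ x ⬝ᵥ C *ᵥ grad ℓ x) + p x * ∑ i, ∑ j, c i j x * pd (pd ℓ j) i x := by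
        rw [key]
    _ = _ := by
        rw [hquad, Lop]
        ring
end

section
/- Let d ≥ 2, a ∈ (0,∞)^d, b ∈ [1,∞)^d with γ_i := a_i + b_i − 1 > 1 for every i, and let α_{ij} ≥ 0 (i ≠ j) with α_{ij} = α_{ji}. Let c be the matrix field on Δ of the tractable class built from g ≡ 1, f_i(t) = t^{b_i} and f_{ij} ≡ α_{ij}; let p(x) := (1/B(a)) ∏_{i=1}^d (x^i)^{a_i − 1}, and u(x) := Σ_{i=1}^d (γ_i / 2) log x^i. Then (1/2) ∫_Δ ∇u(x)ᵀ c(x) ∇u(x) p(x) dx = (1/(8 B(a))) Σ_{i≠j} α_{ij} ( γ_i² B(a + (b_i − 2) e_i + b_j e_j) − γ_i γ_j B(a + (b_i − 1) e_i + (b_j − 1) e_j) ), where e_1,…,e_d are the standard basis vectors of ℝ^d. -/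
/-!
Expanding the quadratic form, `∇uᵀ c ∇u · p` becomes a linear combination of Dirichlet monomials
`∏ₖ (xᵏ)^(rₖ - 1)` whose exponent vectors `r` are `a` shifted at two coordinates, and the integral
of such a monomial over the simplex is `B(r)`. The latter is proved by induction on the dimension:
fixing the first coordinate `x⁰ = t` leaves a Dirichlet integral over the simplex of size `1 - t`,
which by homogeneity is `(1 - t)^(…)` times the one over the unit simplex, and the remaining
integral in `t` is the Beta integral.
-/

open scoped BigOperators
open MeasureTheory

/-- The open unit simplex in `ℝ^d`. -/
def openSimplex (d : ℕ) : Set (Fin d → ℝ) :=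
  {x | (∀ i, 0 < x i) ∧ ∑ i, x i = 1}

/-- The `(d-1)`-dimensional Lebesgue measure on the hyperplane `{∑ xᶦ = 1}`. -/
noncomputable def simplexMeasure (d : ℕ) : Measure (Fin d → ℝ) :=
  Measure.map
    (fun y : Fin (d - 1) → ℝ => fun i : Fin d =>
      if h : (i : ℕ) < d - 1 then y ⟨(i : ℕ), h⟩ else 1 - ∑ j, y j)
    volume

/-- The Dirichlet-example matrix field (tractable class with `g ≡ 1`, `f_i(t) = t^{bᵢ}`,
`f_{ij} ≡ α_{ij}`): `c_{ij}(x) = -α_{ij} (xⁱ)^{bᵢ} (xʲ)^{bⱼ}` for `i ≠ j` and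
`c_{ii}(x) = ∑_{k ≠ i} α_{ik} (xⁱ)^{bᵢ} (x^k)^{b_k}`. -/
noncomputable def cDir {d : ℕ} (b : Fin d → ℝ) (α : Fin d → Fin d → ℝ)
    (i j : Fin d) (x : Fin d → ℝ) : ℝ :=
  if i = j then
    ∑ k ∈ Finset.univ.filter (fun k => k ≠ i), α i k * x i ^ b i * x k ^ b k
  else -(α i j * x i ^ b i * x j ^ b j)

/-- The generalized Beta function `B(r) = ∏ᵢ Γ(rᵢ) / Γ(∑ᵢ rᵢ)`. -/
noncomputable def genBeta {d : ℕ} (r : Fin d → ℝ) : ℝ :=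
  (∏ i, Real.Gamma (r i)) / Real.Gamma (∑ i, r i)

open Set
open scoped ENNReal

lemma lintegral_Ioo_rpow_mul_one_sub_rpow {u v : ℝ} (hu : 0 < u) (hv : 0 < v) :
    ∫⁻ x in Ioo (0 : ℝ) 1, ENNReal.ofReal (x ^ (u - 1) * (1 - x) ^ (v - 1))
      = ENNReal.ofReal (ProbabilityTheory.beta u v) := by
  have hB := ProbabilityTheory.beta_pos hu hv
  have h := ProbabilityTheory.lintegral_betaPDF_eq_one hu hv
  simp_rw [ProbabilityTheory.lintegral_betaPDF, mul_assoc,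
    ENNReal.ofReal_mul (one_div_pos.2 hB).le] at h
  rw [lintegral_const_mul' _ _ ENNReal.ofReal_ne_top] at h
  rw [← mul_one (ENNReal.ofReal _), ← h, ← mul_assoc, ← ENNReal.ofReal_mul hB.le,
    mul_one_div_cancel hB.ne', ENNReal.ofReal_one, one_mul]

lemma lintegral_comp_smul_of_pos {E : Type*} [NormedAddCommGroup E] [NormedSpace ℝ E]
    [MeasurableSpace E] [BorelSpace E] [FiniteDimensional ℝ E] (μ : Measure E)
    [μ.IsAddHaarMeasure] {f : E → ℝ≥0∞} (hf : Measurable f) {c : ℝ} (hc : 0 < c) :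
    ∫⁻ x, f (c • x) ∂μ = ENNReal.ofReal ((c ^ Module.finrank ℝ E)⁻¹) * ∫⁻ x, f x ∂μ := by
  rw [← lintegral_map hf (measurable_const_smul c), Measure.map_addHaar_smul μ hc.ne',
    lintegral_smul_measure, abs_of_pos (by positivity), smul_eq_mul]

lemma lintegral_fin_succ_cons {n : ℕ} {f : (Fin (n + 1) → ℝ) → ℝ≥0∞} (hf : Measurable f) :
    ∫⁻ y, f y = ∫⁻ a, ∫⁻ z : Fin n → ℝ, f (Fin.cons a z) := by
  have he := (measurePreserving_piFinSuccAbove (fun _ : Fin (n + 1) => (volume : Measure ℝ)) 0).symm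
  rw [volume_pi, ← he.lintegral_comp hf,
    lintegral_prod (fun p => f ((MeasurableEquiv.piFinSuccAbove (fun _ => ℝ) 0).symm p))
      (hf.comp (MeasurableEquiv.piFinSuccAbove (fun _ => ℝ) 0).symm.measurable).aemeasurable]
  simp_rw [MeasurableEquiv.piFinSuccAbove_symm_apply, Fin.insertNthEquiv, Fin.insertNth_zero,
    Equiv.coe_fn_mk, cast_eq, ← volume_pi]

/-- The simplex of size `c` with its last coordinate eliminated. -/
def cornerSimplex (n : ℕ) (c : ℝ) : Set (Fin n → ℝ) :=
  {y | (∀ i, 0 < y i) ∧ ∑ i, y i < c}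

lemma measurableSet_cornerSimplex (n : ℕ) (c : ℝ) : MeasurableSet (cornerSimplex n c) :=
  measurableSet_setOfPred.2 (by fun_prop)

lemma pos_of_mem_cornerSimplex {n : ℕ} {c : ℝ} {y : Fin n → ℝ} (hy : y ∈ cornerSimplex n c) :
    0 < c :=
  (Finset.sum_nonneg fun i _ => (hy.1 i).le).trans_lt hy.2

lemma smul_mem_cornerSimplex_iff {n : ℕ} {c : ℝ} (hc : 0 < c) {w : Fin n → ℝ} :
    c • w ∈ cornerSimplex n c ↔ w ∈ cornerSimplex n 1 := by
  simp only [cornerSimplex, mem_ofPred_eq, Pi.smul_apply, smul_eq_mul, ← Finset.mul_sum,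
    mul_pos_iff_of_pos_left hc]
  exact and_congr_right' ⟨fun h => by nlinarith, fun h => by nlinarith⟩

lemma cons_mem_cornerSimplex_iff {n : ℕ} {c a : ℝ} {z : Fin n → ℝ} :
    Fin.cons a z ∈ cornerSimplex (n + 1) c ↔ 0 < a ∧ z ∈ cornerSimplex n (c - a) := by
  simp only [cornerSimplex, mem_ofPred_eq, Fin.forall_fin_succ, Fin.cons_zero, Fin.cons_succ,
    Fin.sum_cons, and_assoc]
  exact and_congr_right' (and_congr_right' ⟨fun h => by linarith, fun h => by linarith⟩)

/-- The unnormalized Dirichlet density with parameters `(s, t)` on the simplex of size `c`, in the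
first `n` coordinates. -/
noncomputable def dirichletKernel {n : ℕ} (s : Fin n → ℝ) (t c : ℝ) : (Fin n → ℝ) → ℝ≥0∞ :=
  (cornerSimplex n c).indicator
    fun y => ENNReal.ofReal ((∏ i, y i ^ (s i - 1)) * (c - ∑ i, y i) ^ (t - 1))

lemma measurable_dirichletKernel {n : ℕ} (s : Fin n → ℝ) (t c : ℝ) :
    Measurable (dirichletKernel s t c) :=
  Measurable.indicator (by fun_prop) (measurableSet_cornerSimplex n c)

lemma dirichletKernel_smul {n : ℕ} (s : Fin n → ℝ) (t : ℝ) {c : ℝ} (hc : 0 < c)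
    (w : Fin n → ℝ) :
    dirichletKernel s t c (c • w)
      = ENNReal.ofReal (c ^ (∑ i, s i + t - 1 - n)) * dirichletKernel s t 1 w := by
  by_cases hw : w ∈ cornerSimplex n 1
  · rw [dirichletKernel, dirichletKernel, indicator_of_mem ((smul_mem_cornerSimplex_iff hc).2 hw),
      indicator_of_mem hw, ← ENNReal.ofReal_mul (by positivity)]
    have hw1 : 0 ≤ 1 - ∑ i, w i := by linarith [hw.2]
    congr 1
    calc (∏ i, (c • w) i ^ (s i - 1)) * (c - ∑ i, (c • w) i) ^ (t - 1)
        = (∏ i, c ^ (s i - 1)) * c ^ (t - 1)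
            * ((∏ i, w i ^ (s i - 1)) * (1 - ∑ i, w i) ^ (t - 1)) := by
          simp only [Pi.smul_apply, smul_eq_mul, ← Finset.mul_sum,
            Real.mul_rpow hc.le (hw.1 _).le, Finset.prod_mul_distrib,
            show c - c * ∑ i, w i = c * (1 - ∑ i, w i) by ring, Real.mul_rpow hc.le hw1]
          ring
      _ = c ^ (∑ i, s i + t - 1 - n) * ((∏ i, w i ^ (s i - 1)) * (1 - ∑ i, w i) ^ (t - 1)) := by
          rw [← Real.rpow_sum_of_pos hc, ← Real.rpow_add hc, Finset.sum_sub_distrib]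
          simp only [Finset.sum_const, Finset.card_univ, Fintype.card_fin, nsmul_eq_mul, mul_one]
          ring_nf
  · rw [dirichletKernel, dirichletKernel,
      indicator_of_notMem (mt (smul_mem_cornerSimplex_iff hc).1 hw), indicator_of_notMem hw,
      mul_zero]

lemma lintegral_dirichletKernel_eq_rpow_mul {n : ℕ} (s : Fin n → ℝ) (t : ℝ) {c : ℝ} (hc : 0 < c) :
    ∫⁻ y, dirichletKernel s t c y
      = ENNReal.ofReal (c ^ (∑ i, s i + t - 1)) * ∫⁻ y, dirichletKernel s t 1 y := by
  have h := lintegral_comp_smul_of_pos volume (measurable_dirichletKernel s t c) hc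
  simp only [dirichletKernel_smul s t hc, Module.finrank_fin_fun,
    lintegral_const_mul _ (measurable_dirichletKernel s t 1)] at h
  calc ∫⁻ y, dirichletKernel s t c y
      = ENNReal.ofReal (c ^ n) * (ENNReal.ofReal (c ^ n)⁻¹ * ∫⁻ y, dirichletKernel s t c y) := by
        rw [← mul_assoc, ← ENNReal.ofReal_mul (by positivity), mul_inv_cancel₀ (by positivity),
          ENNReal.ofReal_one, one_mul]
    _ = _ := by
        rw [← h, ← mul_assoc, ← ENNReal.ofReal_mul (by positivity), ← Real.rpow_natCast,
          ← Real.rpow_add hc]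
        ring_nf

lemma dirichletKernel_cons {n : ℕ} (s : Fin (n + 1) → ℝ) (t c a : ℝ) (z : Fin n → ℝ) :
    dirichletKernel s t c (Fin.cons a z)
      = (Ioi 0).indicator (fun a => ENNReal.ofReal (a ^ (s 0 - 1))) a
          * dirichletKernel (Fin.tail s) t (c - a) z := by
  by_cases ha : 0 < a
  · by_cases hz : z ∈ cornerSimplex n (c - a)
    · rw [dirichletKernel, dirichletKernel,
        indicator_of_mem (cons_mem_cornerSimplex_iff.2 ⟨ha, hz⟩), indicator_of_mem (mem_Ioi.2 ha),
        indicator_of_mem hz, ← ENNReal.ofReal_mul (by positivity)]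
      congr 1
      rw [Fin.prod_univ_succ, Fin.sum_cons, Fin.cons_zero]
      simp only [Fin.cons_succ, Fin.tail, sub_add_eq_sub_sub]
      ring
    · rw [dirichletKernel, dirichletKernel,
        indicator_of_notMem (fun h => hz (cons_mem_cornerSimplex_iff.1 h).2),
        indicator_of_notMem hz, mul_zero]
  · rw [dirichletKernel, indicator_of_notMem (fun h => ha (cons_mem_cornerSimplex_iff.1 h).1),
      indicator_of_notMem (show a ∉ Ioi 0 from ha), zero_mul]

lemma lintegral_dirichletKernel_cons {n : ℕ} (s : Fin (n + 1) → ℝ) (t a : ℝ) :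
    ∫⁻ z, dirichletKernel s t 1 (Fin.cons a z)
      = (Ioo 0 1).indicator
          (fun a => ENNReal.ofReal (a ^ (s 0 - 1) * (1 - a) ^ (∑ i, Fin.tail s i + t - 1))) a
        * ∫⁻ z, dirichletKernel (Fin.tail s) t 1 z := by
  simp_rw [dirichletKernel_cons]
  rw [lintegral_const_mul _ (measurable_dirichletKernel _ _ _)]
  by_cases ha : a ∈ Ioo 0 1
  · rw [lintegral_dirichletKernel_eq_rpow_mul _ _ (sub_pos.2 ha.2),
      indicator_of_mem (mem_Ioi.2 ha.1), indicator_of_mem ha,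
      ENNReal.ofReal_mul (Real.rpow_pos_of_pos ha.1 _).le, mul_assoc]
  · rw [indicator_of_notMem ha, zero_mul]
    rcases not_and_or.1 ha with h0 | h1
    · rw [indicator_of_notMem (show a ∉ Ioi 0 from h0), zero_mul]
    · have hK : ∀ z, dirichletKernel (Fin.tail s) t (1 - a) z = 0 := fun z =>
        indicator_of_notMem (fun hz => by linarith [pos_of_mem_cornerSimplex hz, not_lt.1 h1]) _
      simp [hK]

theorem lintegral_dirichletKernel {n : ℕ} {s : Fin n → ℝ} {t : ℝ} (hs : ∀ i, 0 < s i)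
    (ht : 0 < t) :
    ∫⁻ y, dirichletKernel s t 1 y
      = ENNReal.ofReal ((∏ i, Real.Gamma (s i)) * Real.Gamma t / Real.Gamma (∑ i, s i + t)) := by
  induction n with
  | zero =>
    have h1 : ∀ y : Fin 0 → ℝ, dirichletKernel s t 1 y = 1 := fun y => by
      simp [dirichletKernel, cornerSimplex]
    simp [h1, volume_pi, div_self (Real.Gamma_pos_of_pos ht).ne']
  | succ n ih =>
    set q := ∑ i, Fin.tail s i + t
    have hq : 0 < q := add_pos_of_nonneg_of_pos (Finset.sum_nonneg fun i _ => (hs _).le) ht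
    rw [lintegral_fin_succ_cons (measurable_dirichletKernel s t 1)]
    simp_rw [lintegral_dirichletKernel_cons, ih (s := Fin.tail s) (fun i => hs _)]
    rw [lintegral_mul_const _ ((by fun_prop : Measurable fun a : ℝ =>
        ENNReal.ofReal (a ^ (s 0 - 1) * (1 - a) ^ (q - 1))).indicator measurableSet_Ioo),
      lintegral_indicator measurableSet_Ioo, lintegral_Ioo_rpow_mul_one_sub_rpow (hs 0) hq,
      ← ENNReal.ofReal_mul (ProbabilityTheory.beta_pos (hs 0) hq).le, ProbabilityTheory.beta]
    congr 1
    have hΓq := (Real.Gamma_pos_of_pos hq).ne'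
    rw [Fin.prod_univ_succ, Fin.sum_univ_succ, add_assoc]
    simp only [q, Fin.tail] at hΓq ⊢
    field_simp

lemma simplexMeasure_succ (n : ℕ) :
    simplexMeasure (n + 1) = volume.map fun y : Fin n → ℝ => Fin.snoc y (1 - ∑ j, y j) :=
  rfl

lemma measurableSet_openSimplex (d : ℕ) : MeasurableSet (openSimplex d) :=
  measurableSet_setOfPred.2 (by fun_prop)

lemma snoc_mem_openSimplex_iff {n : ℕ} {y : Fin n → ℝ} :
    (Fin.snoc y (1 - ∑ j, y j) : Fin (n + 1) → ℝ) ∈ openSimplex (n + 1)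
      ↔ y ∈ cornerSimplex n 1 := by
  simp only [openSimplex, cornerSimplex, mem_ofPred_eq, Fin.forall_fin_succ', Fin.snoc_castSucc,
    Fin.snoc_last, Fin.sum_univ_castSucc, sub_pos]
  constructor
  · exact fun h => ⟨h.1.1, h.1.2⟩
  · exact fun h => ⟨h, by ring⟩

lemma genBeta_pos {n : ℕ} {r : Fin (n + 1) → ℝ} (hr : ∀ i, 0 < r i) : 0 < genBeta r :=
  div_pos (Finset.prod_pos fun i _ => Real.Gamma_pos_of_pos (hr i))
    (Real.Gamma_pos_of_pos (Finset.sum_pos (fun i _ => hr i) Finset.univ_nonempty))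

theorem lintegral_openSimplex_prod_rpow {n : ℕ} {r : Fin (n + 1) → ℝ} (hr : ∀ i, 0 < r i) :
    ∫⁻ x in openSimplex (n + 1), ENNReal.ofReal (∏ i, x i ^ (r i - 1)) ∂simplexMeasure (n + 1)
      = ENNReal.ofReal (genBeta r) := by
  rw [simplexMeasure_succ, setLIntegral_map (measurableSet_openSimplex _) (by fun_prop)
    (by fun_prop)]
  have hpre : (fun y : Fin n → ℝ => (Fin.snoc y (1 - ∑ j, y j) : Fin (n + 1) → ℝ)) ⁻¹'
      openSimplex (n + 1) = cornerSimplex n 1 := by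
    ext y; exact snoc_mem_openSimplex_iff
  simp only [hpre, Fin.prod_univ_castSucc, Fin.snoc_castSucc, Fin.snoc_last]
  rw [← lintegral_indicator (measurableSet_cornerSimplex n 1)]
  refine (lintegral_dirichletKernel (s := fun j => r j.castSucc) (fun j => hr _) (hr _)).trans ?_
  rw [genBeta, Fin.prod_univ_castSucc, Fin.sum_univ_castSucc]

lemma prod_rpow_nonneg_ae_openSimplex (n : ℕ) (r : Fin (n + 1) → ℝ) :
    0 ≤ᵐ[(simplexMeasure (n + 1)).restrict (openSimplex (n + 1))]
      fun x => ∏ i, x i ^ (r i - 1) := by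
  filter_upwards [ae_restrict_mem (measurableSet_openSimplex _)] with x hx
  exact Finset.prod_nonneg fun i _ => Real.rpow_nonneg (hx.1 i).le _

lemma integrableOn_openSimplex_prod_rpow {n : ℕ} {r : Fin (n + 1) → ℝ} (hr : ∀ i, 0 < r i) :
    IntegrableOn (fun x => ∏ i, x i ^ (r i - 1)) (openSimplex (n + 1))
      (simplexMeasure (n + 1)) := by
  refine ⟨(Finset.measurable_prod _ fun i _ => by fun_prop).aestronglyMeasurable, ?_⟩
  rw [hasFiniteIntegral_iff_ofReal (prod_rpow_nonneg_ae_openSimplex n r),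
    lintegral_openSimplex_prod_rpow hr]
  exact ENNReal.ofReal_lt_top

theorem integral_openSimplex_prod_rpow {n : ℕ} {r : Fin (n + 1) → ℝ} (hr : ∀ i, 0 < r i) :
    ∫ x in openSimplex (n + 1), ∏ i, x i ^ (r i - 1) ∂simplexMeasure (n + 1) = genBeta r := by
  rw [integral_eq_lintegral_of_nonneg_ae (prod_rpow_nonneg_ae_openSimplex n r)
      (Finset.measurable_prod _ fun i _ => by fun_prop).aestronglyMeasurable,
    lintegral_openSimplex_prod_rpow hr, ENNReal.toReal_ofReal (genBeta_pos hr).le]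

lemma prod_rpow_add_ite {d : ℕ} {x : Fin d → ℝ} (hx : ∀ k, 0 < x k) (a : Fin d → ℝ)
    (i j : Fin d) (c₁ c₂ : ℝ) :
    ∏ k, x k ^ (a k + (if k = i then c₁ else 0) + (if k = j then c₂ else 0) - 1)
      = x i ^ c₁ * x j ^ c₂ * ∏ k, x k ^ (a k - 1) := by
  have hk : ∀ k, x k ^ (a k + (if k = i then c₁ else 0) + (if k = j then c₂ else 0) - 1)
      = (if k = i then x k ^ c₁ else 1) * (if k = j then x k ^ c₂ else 1) * x k ^ (a k - 1) := by
    intro k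
    rw [show a k + (if k = i then c₁ else 0) + (if k = j then c₂ else 0) - 1
        = (if k = i then c₁ else 0) + (if k = j then c₂ else 0) + (a k - 1) by ring,
      Real.rpow_add (hx k), Real.rpow_add (hx k)]
    split_ifs <;> simp
  simp only [hk, Finset.prod_mul_distrib, Finset.prod_ite_eq', Finset.mem_univ, if_true]

lemma add_ite_add_ite_pos {d : ℕ} {a : Fin d → ℝ} (ha : ∀ k, 0 < a k) {i j : Fin d} (hij : i ≠ j)
    {c₁ c₂ : ℝ} (h₁ : 0 < a i + c₁) (h₂ : 0 < a j + c₂) (k : Fin d) :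
    0 < a k + (if k = i then c₁ else 0) + (if k = j then c₂ else 0) := by
  by_cases hki : k = i
  · subst hki; simpa [hij] using h₁
  · by_cases hkj : k = j
    · subst hkj; simpa [hki] using h₂
    · simpa [hki, hkj] using ha k

lemma sum_sum_mul_cDir_mul {d : ℕ} (b : Fin d → ℝ) (α : Fin d → Fin d → ℝ) (x v : Fin d → ℝ) :
    ∑ i, ∑ j, v i * cDir b α i j x * v j
      = ∑ i, ∑ j ∈ Finset.univ.filter (fun j => j ≠ i),
          α i j * x i ^ b i * x j ^ b j * (v i ^ 2 - v i * v j) := by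
  refine Finset.sum_congr rfl fun i _ => ?_
  rw [← Finset.add_sum_erase _ _ (Finset.mem_univ i), cDir, if_pos rfl, Finset.filter_ne',
    Finset.mul_sum, Finset.sum_mul, ← Finset.sum_add_distrib]
  refine Finset.sum_congr rfl fun j hj => ?_
  rw [cDir, if_neg (Finset.ne_of_mem_erase hj).symm]
  ring

lemma sum_sum_cDir_mul_prod_rpow {d : ℕ} (a b γ : Fin d → ℝ) (α : Fin d → Fin d → ℝ)
    {x : Fin d → ℝ} (hx : ∀ k, 0 < x k) :
    (∑ i, ∑ j, (γ i / (2 * x i)) * cDir b α i j x * (γ j / (2 * x j))) * ∏ k, x k ^ (a k - 1)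
      = ∑ i, ∑ j ∈ Finset.univ.filter (fun j => j ≠ i), α i j / 4 *
          (γ i ^ 2 * ∏ k, x k ^ (a k + (if k = i then b i - 2 else 0)
              + (if k = j then b j else 0) - 1)
            - γ i * γ j * ∏ k, x k ^ (a k + (if k = i then b i - 1 else 0)
              + (if k = j then b j - 1 else 0) - 1)) := by
  rw [sum_sum_mul_cDir_mul b α x fun i => γ i / (2 * x i), Finset.sum_mul]
  refine Finset.sum_congr rfl fun i _ => ?_
  rw [Finset.sum_mul]
  refine Finset.sum_congr rfl fun j _ => ?_
  have hxi := (hx i).ne'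
  have hxj := (hx j).ne'
  rw [prod_rpow_add_ite hx, prod_rpow_add_ite hx, Real.rpow_sub (hx i), Real.rpow_two,
    Real.rpow_sub_one hxi, Real.rpow_sub_one hxj]
  field_simp
  ring

theorem statement18_general {d : ℕ}
    (a b : Fin d → ℝ) (ha : ∀ i, 0 < a i)
    (hγ : ∀ i, 1 < a i + b i - 1)
    (α : Fin d → Fin d → ℝ) :
    (1 / 2) * (∫ x in openSimplex d,
        (∑ i, ∑ j, ((a i + b i - 1) / (2 * x i)) * cDir b α i j x
            * ((a j + b j - 1) / (2 * x j)))
          * ((1 / genBeta a) * ∏ i, x i ^ (a i - 1)) ∂(simplexMeasure d))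
      = (1 / (8 * genBeta a)) *
          ∑ i, ∑ j ∈ Finset.univ.filter (fun j => j ≠ i),
            α i j * ((a i + b i - 1) ^ 2 *
                genBeta (fun k => a k + (if k = i then b i - 2 else 0)
                  + (if k = j then b j else 0))
              - (a i + b i - 1) * (a j + b j - 1) *
                genBeta (fun k => a k + (if k = i then b i - 1 else 0)
                  + (if k = j then b j - 1 else 0))) := by
  rcases d with _ | n
  · simp [openSimplex]
  have hpos : ∀ i j, j ≠ i →
      (∀ k, 0 < a k + (if k = i then b i - 2 else 0) + (if k = j then b j else 0)) ∧
      (∀ k, 0 < a k + (if k = i then b i - 1 else 0) + (if k = j then b j - 1 else 0)) :=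
    fun i j hji => ⟨add_ite_add_ite_pos ha hji.symm (by linarith [hγ i]) (by linarith [hγ j]),
      add_ite_add_ite_pos ha hji.symm (by linarith [hγ i]) (by linarith [hγ j])⟩
  have hint₁ i j hji := (integrableOn_openSimplex_prod_rpow (hpos i j hji).1).const_mul
    ((a i + b i - 1) ^ 2)
  have hint₂ i j hji := (integrableOn_openSimplex_prod_rpow (hpos i j hji).2).const_mul
    ((a i + b i - 1) * (a j + b j - 1))
  have hint i j (hj : j ∈ Finset.univ.filter (fun j => j ≠ i)) :=
    ((hint₁ i j (Finset.mem_filter.1 hj).2).sub (hint₂ i j (Finset.mem_filter.1 hj).2)).const_mul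
      (α i j / 4)
  rw [setIntegral_congr_fun (measurableSet_openSimplex _) fun x hx => (mul_left_comm _ _ _).trans
      (congrArg _ (sum_sum_cDir_mul_prod_rpow a b (fun i => a i + b i - 1) α hx.1)),
    integral_const_mul, integral_finsetSum _ ?outer]
  case outer => exact fun i _ => integrable_finsetSum _ (hint i)
  rw [Finset.mul_sum, Finset.mul_sum, Finset.mul_sum]
  refine Finset.sum_congr rfl fun i _ => ?_
  rw [integral_finsetSum _ ?inner, Finset.mul_sum, Finset.mul_sum, Finset.mul_sum]
  case inner => exact hint i
  refine Finset.sum_congr rfl fun j hj => ?_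
  have hji := (Finset.mem_filter.1 hj).2
  rw [integral_const_mul, integral_sub (hint₁ i j hji) (hint₂ i j hji), integral_const_mul,
    integral_const_mul, integral_openSimplex_prod_rpow (hpos i j hji).1,
    integral_openSimplex_prod_rpow (hpos i j hji).2]
  ring

/-- explicit value of the growth rate integral in the Dirichlet example,
with `γᵢ = aᵢ + bᵢ - 1`, `∇u(x)ᵢ = γᵢ/(2xⁱ)` and `p` the Dirichlet density:
`(1/2)∫ ∇uᵀ c ∇u p = (1/(8B(a))) ∑_{i≠j} α_{ij}(γᵢ² B(a+(bᵢ-2)eᵢ+bⱼeⱼ)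
  - γᵢγⱼ B(a+(bᵢ-1)eᵢ+(bⱼ-1)eⱼ))`. -/
theorem statement18 {d : ℕ} (hd : 2 ≤ d)
    (a b : Fin d → ℝ) (ha : ∀ i, 0 < a i) (hb : ∀ i, 1 ≤ b i)
    (hγ : ∀ i, 1 < a i + b i - 1)
    (α : Fin d → Fin d → ℝ)
    (hαnn : ∀ i j : Fin d, i ≠ j → 0 ≤ α i j)
    (hαsymm : ∀ i j, α i j = α j i) :
    (1 / 2) * (∫ x in openSimplex d,
        (∑ i, ∑ j, ((a i + b i - 1) / (2 * x i)) * cDir b α i j x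
            * ((a j + b j - 1) / (2 * x j)))
          * ((1 / genBeta a) * ∏ i, x i ^ (a i - 1)) ∂(simplexMeasure d))
      = (1 / (8 * genBeta a)) *
          ∑ i, ∑ j ∈ Finset.univ.filter (fun j => j ≠ i),
            α i j * ((a i + b i - 1) ^ 2 *
                genBeta (fun k => a k + (if k = i then b i - 2 else 0)
                  + (if k = j then b j else 0))
              - (a i + b i - 1) * (a j + b j - 1) *
                genBeta (fun k => a k + (if k = i then b i - 1 else 0)
                  + (if k = j then b j - 1 else 0))) :=
  statement18_general a b ha hγ α
end

section
/- Let γ₁, γ₂ > 1 and set θ¹ := (γ₁ − 2)/(γ₁ + γ₂ − 2) and θ² := γ₁/(γ₁ + γ₂ − 2). Then the function x ↦ x^{γ₁/2} (1 − x)^{γ₂/2} is concave on the open interval (max(θ¹, 0), min(θ², 1)). -/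
/-!
Write `a = γ₁/2`, `b = γ₂/2` and `f x = x^a (1-x)^b`. On `(0,1)`,
`f'' x = x^(a-2) (1-x)^(b-2) Q(x)` with
`Q(x) = a(a-1)(1-x)² - 2ab x(1-x) + b(b-1)x²`, and with `c = a + b - 1`,
`Q(x) = -(c x - (a-1)) (a - c x) - c x (1-x)`.
For `c > 0` and `x ∈ [0,1]` the second term is nonpositive, and the first one is nonpositive
when `(a-1)/c ≤ x ≤ a/c`, i.e. on `[θ¹, θ²]`.
-/

open Set

noncomputable def betaKernel (a b x : ℝ) : ℝ := x ^ a * (1 - x) ^ b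

lemma betaKernel_eq_mul {x : ℝ} (hx : x ∈ Ioo 0 1) (a b p q : ℝ) :
    betaKernel a b x = betaKernel p q x * (x ^ (a - p) * (1 - x) ^ (b - q)) := by
  have hx' : 0 < 1 - x := sub_pos.2 hx.2
  unfold betaKernel
  rw [← add_sub_cancel p a, ← add_sub_cancel q b, Real.rpow_add hx.1, Real.rpow_add hx']
  simp only [add_sub_cancel_left]
  ring

lemma hasDerivAt_betaKernel {x : ℝ} (hx : x ∈ Ioo 0 1) (a b : ℝ) :
    HasDerivAt (betaKernel a b) (a * betaKernel (a - 1) b x - b * betaKernel a (b - 1) x) x := by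
  have hx' : 0 < 1 - x := sub_pos.2 hx.2
  have := (Real.hasDerivAt_rpow_const (p := a) (Or.inl hx.1.ne')).mul
    (((hasDerivAt_id x).const_sub 1).rpow_const (p := b) (Or.inl hx'.ne'))
  refine this.congr_deriv ?_
  simp only [betaKernel, id]
  ring

lemma hasDerivAt_deriv_betaKernel {x : ℝ} (hx : x ∈ Ioo 0 1) (a b : ℝ) :
    HasDerivAt (fun y => a * betaKernel (a - 1) b y - b * betaKernel a (b - 1) y)
      (betaKernel (a - 2) (b - 2) x *
        (a * (a - 1) * (1 - x) ^ 2 - 2 * a * b * x * (1 - x) + b * (b - 1) * x ^ 2)) x := by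
  have := ((hasDerivAt_betaKernel hx (a - 1) b).const_mul a).sub
    ((hasDerivAt_betaKernel hx a (b - 1)).const_mul b)
  refine this.congr_deriv ?_
  rw [betaKernel_eq_mul hx (a - 1 - 1) b (a - 2) (b - 2),
    betaKernel_eq_mul hx (a - 1) (b - 1) (a - 2) (b - 2),
    betaKernel_eq_mul hx a (b - 1 - 1) (a - 2) (b - 2)]
  ring_nf
  simp only [Real.rpow_zero, Real.rpow_one, Real.rpow_two]
  ring

lemma concavity_quadratic_nonpos {a b x : ℝ} (hc : 0 ≤ a + b - 1) (hx : x ∈ Icc 0 1)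
    (hlo : a - 1 ≤ (a + b - 1) * x) (hhi : (a + b - 1) * x ≤ a) :
    a * (a - 1) * (1 - x) ^ 2 - 2 * a * b * x * (1 - x) + b * (b - 1) * x ^ 2 ≤ 0 := by
  have key : a * (a - 1) * (1 - x) ^ 2 - 2 * a * b * x * (1 - x) + b * (b - 1) * x ^ 2 =
      -(((a + b - 1) * x - (a - 1)) * (a - (a + b - 1) * x)) - (a + b - 1) * (x * (1 - x)) := by
    ring
  have h₁ := mul_nonneg (sub_nonneg.2 hlo) (sub_nonneg.2 hhi)
  have h₂ := mul_nonneg hc (mul_nonneg hx.1 (sub_nonneg.2 hx.2))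
  linarith

lemma concaveOn_betaKernel {a b : ℝ} {s : Set ℝ} (hs : Convex ℝ s) (hs01 : s ⊆ Ioo 0 1)
    (hQ : ∀ x ∈ s,
      a * (a - 1) * (1 - x) ^ 2 - 2 * a * b * x * (1 - x) + b * (b - 1) * x ^ 2 ≤ 0) :
    ConcaveOn ℝ s (betaKernel a b) := by
  have hint : ∀ x ∈ interior s, x ∈ Ioo 0 1 := fun x hx => hs01 (interior_subset hx)
  refine concaveOn_of_hasDerivWithinAt2_nonpos hs
    (fun x hx => (hasDerivAt_betaKernel (hs01 hx) a b).continuousAt.continuousWithinAt)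
    (fun x hx => (hasDerivAt_betaKernel (hint x hx) a b).hasDerivWithinAt)
    (fun x hx => (hasDerivAt_deriv_betaKernel (hint x hx) a b).hasDerivWithinAt)
    (fun x hx => ?_)
  have hx01 := hint x hx
  have hK : 0 ≤ betaKernel (a - 2) (b - 2) x :=
    mul_nonneg (Real.rpow_nonneg hx01.1.le _) (Real.rpow_nonneg (sub_pos.2 hx01.2).le _)
  exact mul_nonpos_of_nonneg_of_nonpos hK (hQ x (interior_subset hx))

/-- for `γ₁, γ₂ > 1`, with `θ¹ = (γ₁-2)/(γ₁+γ₂-2)` and `θ² = γ₁/(γ₁+γ₂-2)`,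
the function `x ↦ x^{γ₁/2} (1-x)^{γ₂/2}` is concave on `(max(θ¹,0), min(θ²,1))`. -/
theorem statement19 (γ₁ γ₂ : ℝ) (h1 : 1 < γ₁) (h2 : 1 < γ₂) :
    ConcaveOn ℝ
      (Set.Ioo (max ((γ₁ - 2) / (γ₁ + γ₂ - 2)) 0) (min (γ₁ / (γ₁ + γ₂ - 2)) 1))
      (fun x : ℝ => x ^ (γ₁ / 2) * (1 - x) ^ (γ₂ / 2)) := by
  have hs : 0 < γ₁ + γ₂ - 2 := by linarith
  have hmem : ∀ x ∈ Ioo (max ((γ₁ - 2) / (γ₁ + γ₂ - 2)) 0) (min (γ₁ / (γ₁ + γ₂ - 2)) 1),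
      x ∈ Ioo 0 1 ∧ γ₁ - 2 < x * (γ₁ + γ₂ - 2) ∧ x * (γ₁ + γ₂ - 2) < γ₁ := by
    rintro x ⟨hlo, hhi⟩
    rw [max_lt_iff, div_lt_iff₀ hs] at hlo
    rw [lt_min_iff, lt_div_iff₀ hs] at hhi
    exact ⟨⟨hlo.2, hhi.2⟩, hlo.1, hhi.1⟩
  refine concaveOn_betaKernel (convex_Ioo _ _) (fun x hx => (hmem x hx).1) fun x hx => ?_
  obtain ⟨hx, hlo, hhi⟩ := hmem x hx
  exact concavity_quadratic_nonpos (by linarith) (Ioo_subset_Icc_self hx) (by linarith) (by linarith)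
end
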